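/- arXiv:2405.00853 — 2 statements merged into one kernel-verified Lean document; each statement's English description precedes it below -/
import Mathlib

section
/- Let G = (V,E) be a finite simple connected graph and let H be a monophonic halfspace of G with H ≠ ∅ and H ≠ V. Then there exists a set C ⊆ δ(H) of at most ω(G) cut edges such that H = ⋃_{{z,v} ∈ C, z ∈ H} z/v, i.e., H is the union of at most ω(G) monophonic shadows z/v taken over cut edges {z,v} with z ∈ H and v ∉ H. -/
open SimpleGraph

variable {V : Type*}

/-- A walk is an induced (chordless) path. -/
def IsInducedPath (G : SimpleGraph V) {x y : V} (p : G.Walk x y) : Prop :=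
  p.IsPath ∧ ∀ a b : V, a ∈ p.support → b ∈ p.support → G.Adj a b → s(a, b) ∈ p.edges

/-- The monophonic interval between `u` and `v`: all vertices on some induced
path between `u` and `v` (empty if `u = v`). -/
def mInterval (G : SimpleGraph V) (u v : V) : Set V :=
  {z | u ≠ v ∧ ∃ p : G.Walk u v, IsInducedPath G p ∧ z ∈ p.support}

/-- Monophonic convexity. -/
def MConvex (G : SimpleGraph V) (C : Set V) : Prop :=
  ∀ x ∈ C, ∀ y ∈ C, mInterval G x y ⊆ C

/-- Monophonic halfspace. -/
def IsMHalfspace (G : SimpleGraph V) (H : Set V) : Prop :=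
  MConvex G H ∧ MConvex G Hᶜ

/-- The monophonic shadow `u/v`. -/
def mShadow (G : SimpleGraph V) (u v : V) : Set V :=
  {z | u ∈ mInterval G z v}

/-- The border `Γ(X)`: vertices of `X` with a neighbour outside `X`. -/
def border (G : SimpleGraph V) (X : Set V) : Set V :=
  {x | x ∈ X ∧ ∃ y, y ∉ X ∧ G.Adj x y}

/-- `△⁻uv = N(u) ∩ N(v)`. -/
def triMinus (G : SimpleGraph V) (u v : V) : Set V :=
  G.neighborSet u ∩ G.neighborSet v

/-- `△uv = (N(u) ∩ N(v)) ∪ {u, v}`. -/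
def triangleSet (G : SimpleGraph V) (u v : V) : Set V :=
  (G.neighborSet u ∩ G.neighborSet v) ∪ {u, v}

/-- `□uv`: vertices appearing in some 4-cycle of `G` having `{u,v}` as an edge. -/
def squareSet (G : SimpleGraph V) (u v : V) : Set V :=
  {x | ∃ a b : V, G.Adj v a ∧ G.Adj a b ∧ G.Adj b u ∧
    a ≠ u ∧ a ≠ v ∧ b ≠ u ∧ b ≠ v ∧ a ≠ b ∧ (x = u ∨ x = v ∨ x = a ∨ x = b)}

/-- `A = □uv \ △⁻uv`. -/
def setA (G : SimpleGraph V) (u v : V) : Set V :=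
  squareSet G u v \ triMinus G u v

/-- `Aᵘ = {x ∈ A : d(x,u) < d(x,v)}`. -/
noncomputable def setAu (G : SimpleGraph V) (u v : V) : Set V :=
  {x ∈ setA G u v | G.dist x u < G.dist x v}

/-- `Aᵛ = A \ Aᵘ`. -/
noncomputable def setAv (G : SimpleGraph V) (u v : V) : Set V :=
  setA G u v \ setAu G u v

/-- The graph obtained from `G` by deleting all edges of the induced subgraph `G[S]`. -/
def delInduced (G : SimpleGraph V) (S : Set V) : SimpleGraph V where
  Adj a b := G.Adj a b ∧ ¬(a ∈ S ∧ b ∈ S)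
  symm := by
    constructor
    intro a b h
    exact ⟨h.1.symm, fun hc => h.2 ⟨hc.2, hc.1⟩⟩
  loopless := ⟨fun a h => G.irrefl h.1⟩

/-- The graph `T = G \ E(G[□uv ∪ △⁻uv])`. -/
def graphT (G : SimpleGraph V) (u v : V) : SimpleGraph V :=
  delInduced G (squareSet G u v ∪ triMinus G u v)

/-- The monophonic convex hull of `X`. -/
def mHull (G : SimpleGraph V) (X : Set V) : Set V :=
  ⋂₀ {C | MConvex G C ∧ X ⊆ C}

/-- `S` is an `(a,b)`-separator: every walk from `a` to `b` meets `S`. -/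
def IsSeparator (G : SimpleGraph V) (S : Set V) (a b : V) : Prop :=
  ∀ p : G.Walk a b, ∃ s ∈ S, s ∈ p.support

/-- The cutset `δ(X)` as a set of edges. -/
def cutset (G : SimpleGraph V) (X : Set V) : Set (Sym2 V) :=
  {e | e ∈ G.edgeSet ∧ ∃ a b : V, e = s(a, b) ∧ a ∈ X ∧ b ∉ X}

/-- A family of sets `ℋ` shatters a set `S`. -/
def Shatters (ℋ : Set (Set V)) (S : Set V) : Prop :=
  ∀ T ⊆ S, ∃ H ∈ ℋ, H ∩ S = T

/-- `G` is `S₄` for monophonic convexity: disjoint m-convex sets are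
halfspace separable. -/
def IsS4 (G : SimpleGraph V) : Prop :=
  ∀ C₁ C₂ : Set V, MConvex G C₁ → MConvex G C₂ → Disjoint C₁ C₂ →
    ∃ H : Set V, IsMHalfspace G H ∧ C₁ ⊆ H ∧ C₂ ⊆ Hᶜ

/-!
Fix a cut edge `zv` with `z ∈ H`. The neighbours of `v` in `H` form a clique: two non-adjacent
ones `a, b` would put `v` on the induced path `a v b`, hence in `H`. Every `x ∈ H` is joined to
`z` inside `H`; appending the edge `zv` and shortening to an induced path gives an induced
`x`–`v` path whose penultimate vertex `y` is a neighbour of `v` in `H`, so `x ∈ y/v`.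
Conversely, `y ∈ I(x, v)` with `y ∈ H` and `v ∉ H` forces `x ∈ H`, since `V ∖ H` is convex.
-/

namespace SimpleGraph

variable {G : SimpleGraph V}

namespace Walk

theorem exists_length_lt_of_isChord {u w : V} (p : G.Walk u w) {e : Sym2 V} (he : p.IsChord e) :
    ∃ q : G.Walk u w, q.length < p.length ∧ q.support ⊆ p.support := by
  induction e using Sym2.ind with | _ a b => ?_
  obtain ⟨hab, hne, ha, hb⟩ := isChord_sym2Mk.mp he
  obtain ⟨i, rfl, hi⟩ := mem_support_iff_exists_getVert.mp ha
  obtain ⟨j, rfl, hj⟩ := mem_support_iff_exists_getVert.mp hb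
  have shortcut : ∀ i j, i + 1 < j → j ≤ p.length → G.Adj (p.getVert i) (p.getVert j) →
      ∃ q : G.Walk u w, q.length < p.length ∧ q.support ⊆ p.support := by
    intro i j hij hj hadj
    refine ⟨(p.take i).append (cons hadj (p.drop j)), ?_, ?_⟩
    · simp only [length_append, length_cons, take_length, drop_length]
      omega
    · simp only [support_append, support_cons, List.tail_cons, support_take,
        drop_support_eq_support_drop_min]
      exact List.append_subset.mpr ⟨List.take_subset _ _, List.drop_subset _ _⟩
  have hmem : ∀ k < p.length, s(p.getVert k, p.getVert (k + 1)) ∈ p.edges := fun k hk =>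
    p.mk_mem_edges_iff_exists.mpr ⟨k, hk, rfl⟩
  rcases (by omega : i + 1 < j ∨ j + 1 < i ∨ j = i + 1 ∨ i = j + 1 ∨ i = j)
    with h | h | rfl | rfl | rfl
  · exact shortcut i j h hj hab
  · exact shortcut j i h hi hab.symm
  · exact absurd (hmem i (by omega)) hne
  · exact absurd (Sym2.eq_swap ▸ hmem j (by omega)) hne
  · exact absurd hab G.irrefl

theorem exists_isPath_isChordless_support_subset {u w : V} (p : G.Walk u w) :
    ∃ q : G.Walk u w, q.IsPath ∧ q.IsChordless ∧ q.support ⊆ p.support := by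
  classical
  induction h : p.length using Nat.strong_induction_on generalizing p with | _ n ih => ?_
  by_cases hc : p.bypass.IsChordless
  · exact ⟨p.bypass, p.bypass_isPath, hc, p.support_bypass_subset_support⟩
  obtain ⟨e, he⟩ : ∃ e, p.bypass.IsChord e := by simpa [IsChordless] using hc
  obtain ⟨q, hlt, hsub⟩ := p.bypass.exists_length_lt_of_isChord he
  obtain ⟨r, hr, hrc, hrsub⟩ := ih q.length (h ▸ hlt.trans_le p.length_bypass_le_length) q rfl
  exact ⟨r, hr, hrc, fun x hx => p.support_bypass_subset_support (hsub (hrsub hx))⟩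

end Walk

theorem IsClique.ncard_le_cliqueNum [Finite V] {s : Set V} (hs : G.IsClique s) :
    s.ncard ≤ G.cliqueNum := by
  obtain ⟨t, rfl⟩ := s.toFinite.exists_finset_coe
  rw [Set.ncard_coe_finset]
  exact IsClique.card_le_cliqueNum (tc := hs)

end SimpleGraph

section Monophonic

variable {G : SimpleGraph V} {C : Set V} {v : V}

theorem isInducedPath_iff {x y : V} {p : G.Walk x y} :
    IsInducedPath G p ↔ p.IsPath ∧ p.IsChordless := by
  rw [Walk.isChordless_iff_forall_mem_edges]
  rfl

theorem isInducedPath_cons_cons_nil {a b : V} (hav : G.Adj a v) (hvb : G.Adj v b) (hab : a ≠ b)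
    (hnadj : ¬G.Adj a b) : IsInducedPath G (Walk.cons hav (Walk.cons hvb Walk.nil)) := by
  refine isInducedPath_iff.mpr ⟨by simp [hav.ne, hvb.ne, hab], ?_⟩
  simp only [Walk.isChordless_iff_forall_mem_edges, Walk.support_cons, Walk.support_nil,
    Walk.edges_cons, Walk.edges_nil, List.mem_cons, List.not_mem_nil, or_false]
  have hba : ¬G.Adj b a := fun h => hnadj h.symm
  rintro x y (rfl | rfl | rfl) (rfl | rfl | rfl) hxy <;> simp_all [Sym2.eq_swap]

theorem MConvex.support_subset {x y : V} (hC : MConvex G C) (hx : x ∈ C) (hy : y ∈ C)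
    {p : G.Walk x y} (hp : IsInducedPath G p) : ∀ z ∈ p.support, z ∈ C := by
  intro z hz
  by_cases hxy : x = y
  · subst hxy
    rw [Walk.nil_iff_support_eq.mp (Walk.isPath_iff_nil.mp hp.1), List.mem_singleton] at hz
    exact hz ▸ hx
  · exact hC x hx y hy ⟨hxy, p, hp, hz⟩

theorem MConvex.exists_walk_support_subset {x y : V} (hC : MConvex G C) (hx : x ∈ C)
    (hy : y ∈ C) (hxy : G.Reachable x y) : ∃ p : G.Walk x y, ∀ z ∈ p.support, z ∈ C := by
  obtain ⟨p⟩ := hxy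
  obtain ⟨q, hq, hqc, -⟩ := p.exists_isPath_isChordless_support_subset
  exact ⟨q, hC.support_subset hx hy (isInducedPath_iff.mpr ⟨hq, hqc⟩)⟩

theorem MConvex.isClique_neighborSet_inter (hC : MConvex G C) (hv : v ∉ C) :
    G.IsClique (G.neighborSet v ∩ C) := by
  rintro a ⟨hva, ha⟩ b ⟨hvb, hb⟩ hab
  by_contra hnadj
  exact hv (hC a ha b hb ⟨hab, _, isInducedPath_cons_cons_nil (G.adj_symm hva) hvb hab hnadj,
    by simp⟩)

theorem MConvex.exists_mem_mShadow {x z : V} (hC : MConvex G C) (hv : v ∉ C) (hz : z ∈ C)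
    (hzv : G.Adj z v) (hx : x ∈ C) (hxz : G.Reachable x z) :
    ∃ y ∈ G.neighborSet v ∩ C, x ∈ mShadow G y v := by
  obtain ⟨p, hpC⟩ := hC.exists_walk_support_subset hx hz hxz
  obtain ⟨q, hq, hqc, hsub⟩ := (p.concat hzv).exists_isPath_isChordless_support_subset
  have hxv : x ≠ v := fun h => hv (h ▸ hx)
  have hyv : G.Adj q.penultimate v := q.adj_penultimate (Walk.not_nil_of_ne hxv)
  have hyq : q.penultimate ∈ q.support := q.getVert_mem_support _
  have hyC : q.penultimate ∈ C := by
    have : q.penultimate ∈ p.support ∨ q.penultimate = v := by simpa using hsub hyq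
    exact hpC _ (this.resolve_right hyv.ne)
  exact ⟨q.penultimate, ⟨hyv.symm, hyC⟩, hxv, q, isInducedPath_iff.mpr ⟨hq, hqc⟩, hyq⟩

theorem mShadow_subset_of_mConvex_compl {y : V} (hC : MConvex G Cᶜ) (hy : y ∈ C)
    (hv : v ∉ C) : mShadow G y v ⊆ C :=
  fun x hx => by_contra fun hxC => hC x hxC v hv hx hy

end Monophonic

/-- a nontrivial m-halfspace is the union of at most `ω(G)`
monophonic shadows over cut edges. -/
theorem mhalfspace_eq_union_cliqueNum_shadows [Fintype V] (G : SimpleGraph V)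
    (hG : G.Connected) (H : Set V) (hH : IsMHalfspace G H)
    (hne : H ≠ ∅) (hnuniv : H ≠ Set.univ) :
    ∃ C : Set (V × V),
      (∀ p ∈ C, G.Adj p.1 p.2 ∧ p.1 ∈ H ∧ p.2 ∉ H) ∧
      C.ncard ≤ G.cliqueNum ∧
      H = ⋃ p ∈ C, mShadow G p.1 p.2 := by
  obtain ⟨x₀, hx₀⟩ := Set.nonempty_iff_ne_empty.mpr hne
  obtain ⟨y₀, hy₀⟩ := (Set.ne_univ_iff_exists_notMem H).mp hnuniv
  obtain ⟨⟨⟨z, v⟩, hzv⟩, -, hz, hv⟩ :=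
    (hG.preconnected x₀ y₀).some.exists_boundary_dart H hx₀ hy₀
  refine ⟨(·, v) '' (G.neighborSet v ∩ H), ?_, ?_, ?_⟩
  · rintro _ ⟨y, ⟨hvy, hy⟩, rfl⟩
    exact ⟨hvy.symm, hy, hv⟩
  · rw [Set.ncard_image_of_injective _ (Prod.mk_left_injective v)]
    exact (hH.1.isClique_neighborSet_inter hv).ncard_le_cliqueNum
  · apply subset_antisymm
    · intro x hx
      obtain ⟨y, hy, hxy⟩ := hH.1.exists_mem_mShadow hv hz hzv hx (hG.preconnected x z)
      exact Set.mem_biUnion (Set.mem_image_of_mem _ hy) hxy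
    · intro x hx
      simp only [Set.mem_iUnion, Set.mem_image] at hx
      obtain ⟨_, ⟨y, hy, rfl⟩, hxy⟩ := hx
      exact mShadow_subset_of_mConvex_compl hH.2 hy.2 hv hxy
end

section
/- Let G = (V,E) be a finite simple connected graph, let H be a monophonic halfspace of G, and let F = ¬G[Γ(H) ∪ Γ(V∖H)] be the complement of the subgraph induced by the union of the two borders. Then for every edge {x,y} of F, exactly one of x,y belongs to H; consequently every connected component of F is bipartite, with sides given by its intersection with H and with V∖H. -/
open SimpleGraph

variable {V : Type*}

/-!
Shortest walks are induced paths, so two vertices joined by a walk inside a vertex set `S` are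
joined by an induced path inside `S`. For `x, y ∈ Γ(H)` with outside neighbours `x', y'`, the
convex set `Hᶜ` contains an induced `x'`–`y'` path, hence `x` and `y` are joined by an induced
path inside `{x, y} ∪ Hᶜ`. Its inner vertices lie in `I(x, y) ⊆ H`, so there are none: `x` and
`y` are adjacent. Thus `Γ(H)` and `Γ(V∖H)` are cliques of `G`, and every edge of the complement
of `G[Γ(H) ∪ Γ(V∖H)]` joins the two borders.
-/

namespace SimpleGraph.Walk

variable {W : Type*} {G : SimpleGraph V} {G' : SimpleGraph W} {u v : V}

theorem isChordless_of_length_eq_dist {p : G.Walk u v} (hp : p.length = G.dist u v) :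
    p.IsChordless := by
  classical
  have edge_of_subwalk : ∀ {a b : V} {q : G.Walk a b}, q.IsSubwalk p → G.Adj a b →
      s(a, b) ∈ p.edges := by
    intro a b q hq hab
    have hlen : q.length = 1 := by
      rw [length_eq_dist_of_subwalk hp hq, dist_eq_one_iff_adj.mpr hab]
    have hnil : ¬q.Nil := by rw [← length_eq_zero_iff, hlen]; simp
    have hedge := q.mk_start_snd_mem_edges hnil
    rw [snd, ← hlen, getVert_length] at hedge
    exact hq.edges_subset hedge
  rw [isChordless_iff_forall_mem_edges]
  intro a b ha hb hab
  rw [← p.take_spec ha, mem_support_append_iff] at hb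
  rcases hb with hb | hb
  · rw [Sym2.eq_swap]
    exact edge_of_subwalk ((isSubwalk_dropUntil _ hb).trans (isSubwalk_takeUntil _ ha)) hab.symm
  · exact edge_of_subwalk ((isSubwalk_takeUntil _ hb).trans (isSubwalk_dropUntil _ ha)) hab

theorem IsChordless.map {p : G.Walk u v} (hp : p.IsChordless) (f : G ↪g G') :
    (p.map f.toHom).IsChordless := by
  rw [isChordless_iff_forall_mem_edges] at hp ⊢
  intro a b ha hb hab
  simp only [support_map, List.mem_map] at ha hb
  obtain ⟨a, ha, rfl⟩ := ha
  obtain ⟨b, hb, rfl⟩ := hb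
  rw [edges_map]
  exact List.mem_map_of_mem (hp ha hb (f.map_adj_iff.mp hab))

end SimpleGraph.Walk

variable {G : SimpleGraph V} {u v : V}

theorem isInducedPath_iff_isPath_and_isChordless {p : G.Walk u v} :
    IsInducedPath G p ↔ p.IsPath ∧ p.IsChordless := by
  rw [Walk.isChordless_iff_forall_mem_edges]
  rfl

theorem SimpleGraph.Reachable.exists_isInducedPath (h : G.Reachable u v) :
    ∃ p : G.Walk u v, IsInducedPath G p := by
  obtain ⟨p, hp⟩ := h.exists_walk_length_eq_dist
  exact ⟨p, isInducedPath_iff_isPath_and_isChordless.mpr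
    ⟨p.isPath_of_length_eq_dist hp, p.isChordless_of_length_eq_dist hp⟩⟩

theorem SimpleGraph.Walk.exists_isInducedPath_of_support_subset {S : Set V} (w : G.Walk u v)
    (hw : ∀ z ∈ w.support, z ∈ S) :
    ∃ p : G.Walk u v, IsInducedPath G p ∧ ∀ z ∈ p.support, z ∈ S := by
  obtain ⟨p, hp⟩ := (w.induce S hw).reachable.exists_isInducedPath
  rw [isInducedPath_iff_isPath_and_isChordless] at hp
  refine ⟨p.map (Embedding.induce S).toHom, isInducedPath_iff_isPath_and_isChordless.mpr
    ⟨hp.1.map Subtype.val_injective, hp.2.map _⟩, fun z hz => ?_⟩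
  have hz' : z ∈ p.support.map Subtype.val := Walk.support_map (Embedding.induce S).toHom p ▸ hz
  obtain ⟨z, -, rfl⟩ := List.mem_map.mp hz'
  exact z.2

theorem MConvex.exists_walk_support_subset_s5 (hG : G.Preconnected) {C : Set V}
    (hC : MConvex G C) (hu : u ∈ C) (hv : v ∈ C) :
    ∃ p : G.Walk u v, ∀ z ∈ p.support, z ∈ C := by
  obtain rfl | huv := eq_or_ne u v
  · exact ⟨.nil, by simpa⟩
  obtain ⟨p, hp⟩ := (hG u v).exists_isInducedPath
  exact ⟨p, fun z hz => hC u hu v hv ⟨huv, p, hp, hz⟩⟩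

theorem IsMHalfspace.compl {H : Set V} (hH : IsMHalfspace G H) : IsMHalfspace G Hᶜ :=
  ⟨hH.2, (compl_compl H).symm ▸ hH.1⟩

theorem IsMHalfspace.isClique_border (hG : G.Preconnected) {H : Set V}
    (hH : IsMHalfspace G H) : G.IsClique (border G H) := by
  intro x hx y hy hxy
  by_contra hnadj
  obtain ⟨hxH, x', hx', hxx'⟩ := hx
  obtain ⟨hyH, y', hy', hyy'⟩ := hy
  obtain ⟨q, hq⟩ := hH.2.exists_walk_support_subset_s5 hG hx' hy'
  obtain ⟨p, hp, hpS⟩ := (Walk.cons hxx' (q.concat hyy'.symm)).exists_isInducedPath_of_support_subset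
    (S := insert x (insert y Hᶜ)) (by simp [Walk.support_concat]; grind)
  cases p with
  | nil => exact hxy rfl
  | @cons _ c _ hxc p' =>
    have hc : c ∈ (Walk.cons hxc p').support := by simp
    have hcH : c ∈ H := hH.1 x hxH y hyH ⟨hxy, _, hp, hc⟩
    rcases hpS c hc with rfl | rfl | hcH'
    · exact hxc.ne rfl
    · exact hnadj hxc
    · exact hcH' hcH

theorem IsMHalfspace.mem_iff_notMem_of_not_adj (hG : G.Preconnected) {H : Set V}
    (hH : IsMHalfspace G H) {x y : V} (hx : x ∈ border G H ∪ border G Hᶜ)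
    (hy : y ∈ border G H ∪ border G Hᶜ) (hxy : x ≠ y) (hnadj : ¬G.Adj x y) :
    x ∈ H ↔ y ∉ H := by
  refine ⟨fun hxH hyH => hnadj ?_, fun hyH => by_contra fun hxH => hnadj ?_⟩
  · exact hH.isClique_border hG (hx.resolve_right fun h => h.1 hxH)
      (hy.resolve_right fun h => h.1 hyH) hxy
  · exact hH.compl.isClique_border hG (hx.resolve_left fun h => hxH h.1)
      (hy.resolve_left fun h => hyH h.1) hxy

theorem compl_borders_bipartite_general (G : SimpleGraph V)
    (hG : G.Connected) (H : Set V) (hH : IsMHalfspace G H) :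
    (∀ x y : ↥(border G H ∪ border G Hᶜ),
        ((G.induce (border G H ∪ border G Hᶜ))ᶜ).Adj x y →
          ((x : V) ∈ H ↔ (y : V) ∉ H)) ∧
    ((G.induce (border G H ∪ border G Hᶜ))ᶜ).Colorable 2 := by
  have crossing : ∀ x y : ↥(border G H ∪ border G Hᶜ),
      ((G.induce (border G H ∪ border G Hᶜ))ᶜ).Adj x y → ((x : V) ∈ H ↔ (y : V) ∉ H) :=
    fun x y ⟨hne, hnadj⟩ =>
      hH.mem_iff_notMem_of_not_adj hG.preconnected x.2 y.2 (Subtype.coe_ne_coe.mpr hne) hnadj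
  have side : ((G.induce (border G H ∪ border G Hᶜ))ᶜ).Coloring Prop :=
    Coloring.mk (fun x => (x : V) ∈ H) fun hadj heq => by simpa [heq] using crossing _ _ hadj
  exact ⟨crossing, by simpa using side.colorable⟩

/-- in `F = ¬G[Γ(H) ∪ Γ(V∖H)]`, every edge has exactly one endpoint
in `H`; consequently `F` is bipartite. -/
theorem compl_borders_bipartite [Fintype V] (G : SimpleGraph V)
    (hG : G.Connected) (H : Set V) (hH : IsMHalfspace G H) :
    (∀ x y : ↥(border G H ∪ border G Hᶜ),
        ((G.induce (border G H ∪ border G Hᶜ))ᶜ).Adj x y →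
          ((x : V) ∈ H ↔ (y : V) ∉ H)) ∧
    ((G.induce (border G H ∪ border G Hᶜ))ᶜ).Colorable 2 :=
  compl_borders_bipartite_general G hG H hH
end
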